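/- Differentiability of the limit free energy in the external parameter (Lemma 4.4). Let d ≥ 1, H ≥ 0, L_ψ, L_ξ > 0, set t⋆ = (L_ψ L_ξ)^{-1}, and let t ∈ [0,t⋆) and q ∈ Q_∞. Assume ξ : ℝ^{D×D} → ℝ is smooth with ∇ξ L_ξ-Lipschitz on B, and for every p ∈ Q_{∞,≤1} the path s ↦ ∇ξ(p(s)) lies in Q_∞. Assume (ψ(·;x))_{x ∈ ℝ^d} is a family of functions on Q_∞ such that: (i) for every x and q̃ ∈ Q_∞ there is ∇_q ψ(q̃;x) ∈ Q_{∞,≤1} with |ψ(q̃′;x) − ψ(q̃;x) − ⟨q̃′ − q̃, ∇_q ψ(q̃;x)⟩_{L²}| ≤ 8|q̃′ − q̃|²_{L²} for all q̃′ ∈ Q_∞; (ii) |∇_q ψ(q̃;x) − ∇_q ψ(q̃′;x′)|_{L^∞} ≤ L_ψ|q̃ − q̃′|_{L^∞} + 4H|x − x′|; (iii) for every q̃ ∈ Q_∞ the function ψ(q̃;·) is differentiable on ℝ^d with |∇_x ψ(q̃;x)| ≤ H, |ψ(q̃;x′) − ψ(q̃;x) − (x′−x)·∇_x ψ(q̃;x)|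 ≤ H²|x−x′|², and |∇_x ψ(q̃;x) − ∇_x ψ(q̃′;x′)| ≤ 8H|q̃ − q̃′|_{L¹} + 2H²|x−x′|. For each x ∈ ℝ^d let p^x ∈ Q_{∞,≤1} be a solution of p^x = ∇_q ψ(q + t∇ξ(p^x); x) and define f(t,q;x) = ψ(q + t∇ξ(p^x); x) − t ∫₀¹ θ(p^x(u)) du. Then the function x ↦ f(t,q;x) is Lipschitz with constant H and continuously differentiable on ℝ^d, with ∇_x f(t,q;x) = ∇_x ψ(q + t∇ξ(p^x); x) for every x ∈ ℝ^d. -/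

import Mathlib

noncomputable section

open MeasureTheory Set Filter Topology RealInnerProductSpace

/-- `D×D` real matrices with the Frobenius (Euclidean) norm. -/
abbrev Mat (D : ℕ) : Type := EuclideanSpace ℝ (Fin D × Fin D)

/-- symmetric positive semidefinite matrices -/
def Mat.PSD {D : ℕ} (a : Mat D) : Prop :=
  (∀ i j : Fin D, a (i, j) = a (j, i)) ∧
    ∀ v : Fin D → ℝ, 0 ≤ ∑ i, ∑ j, v i * a (i, j) * v j

/-- the unit interval `[0,1)` as a type -/
abbrev UI : Type := Set.Ico (0 : ℝ) 1

abbrev SPath (D : ℕ) : Type := UI → Mat D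

/-- Lebesgue measure on `[0,1)` -/
instance : MeasureSpace UI := ⟨(volume : Measure ℝ).comap Subtype.val⟩

/-- càdlàg increasing `S^D_+`-valued path, i.e. a member of `Q` -/
def IsQ {D : ℕ} (p : SPath D) : Prop :=
  (∀ s, Mat.PSD (p s)) ∧
  (∀ s t : UI, s ≤ t → Mat.PSD (p t - p s)) ∧
  (∀ s : UI, ContinuousWithinAt p (Set.Ici s) s) ∧
  (∀ s : UI, (0 : ℝ) < (s : ℝ) →
    ∃ L : Mat D, Tendsto p (nhdsWithin s (Set.Iio s)) (nhds L))

/-- `L^∞` norm (sup norm on `[0,1)`) -/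
def supN {D : ℕ} (p : SPath D) : ℝ := sSup (Set.range fun s => ‖p s‖)

/-- bounded path, i.e. member of `L^∞` -/
def Bdd {D : ℕ} (p : SPath D) : Prop := BddAbove (Set.range fun s => ‖p s‖)

/-- `L¹` norm -/
def L1N {D : ℕ} (p : SPath D) : ℝ := ∫ s, ‖p s‖

/-- `L²` norm -/
def L2N {D : ℕ} (p : SPath D) : ℝ := Real.sqrt (∫ s, ‖p s‖ ^ 2)

/-- `L²` inner product -/
def L2I {D : ℕ} (p q : SPath D) : ℝ := ∫ s, ⟪p s, q s⟫

def Qinf (D : ℕ) : Set (SPath D) := {p | IsQ p ∧ Bdd p}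

def Qle1 (D : ℕ) : Set (SPath D) := {p | IsQ p ∧ ∀ s, ‖p s‖ ≤ 1}

def Q1 (D : ℕ) : Set (SPath D) := {p | IsQ p ∧ Integrable fun s => ‖p s‖}

def Q2 (D : ℕ) : Set (SPath D) := {p | IsQ p ∧ Integrable fun s => ‖p s‖ ^ 2}

/-- the path `s ↦ ∇ξ(p(s))` -/
def gradPath {D : ℕ} (ξ : Mat D → ℝ) (p : SPath D) : SPath D := fun s => gradient ξ (p s)

/-- `θ(a) = a·∇ξ(a) − ξ(a)` -/
def theta {D : ℕ} (ξ : Mat D → ℝ) (a : Mat D) : ℝ := ⟪a, gradient ξ a⟫ - ξ a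

/-- `∇ξ` is `L`-Lipschitz on the unit ball `B` -/
def LipOnB {D : ℕ} (ξ : Mat D → ℝ) (L : ℝ) : Prop :=
  ∀ a b : Mat D, ‖a‖ ≤ 1 → ‖b‖ ≤ 1 → ‖gradient ξ a - gradient ξ b‖ ≤ L * ‖a - b‖

/-! ### Auxiliary lemmas -/

lemma ui_mem0 : (0:ℝ) ∈ Set.Ico (0:ℝ) 1 := by norm_num

instance : Nonempty UI := ⟨⟨0, ui_mem0⟩⟩

instance : IsProbabilityMeasure (volume : Measure UI) := by
  constructor
  rw [show (volume : Measure UI) = (volume : Measure ℝ).comap Subtype.val from rfl]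
  rw [MeasurableEmbedding.comap_apply (MeasurableEmbedding.subtype_coe measurableSet_Ico)]
  rw [Set.image_univ, Subtype.range_coe, Real.volume_Ico]; norm_num

lemma ui_abs_integral_le {f : UI → ℝ} {C : ℝ} (h : ∀ s, ‖f s‖ ≤ C) : |∫ s, f s| ≤ C := by
  rw [← Real.norm_eq_abs]
  calc ‖∫ s, f s‖ ≤ ∫ _s : UI, C := norm_integral_le_of_norm_le (integrable_const C) (ae_of_all _ h)
  _ = C := by simp

lemma ui_integral_le {f : UI → ℝ} {C : ℝ} (h : ∀ s, ‖f s‖ ≤ C) : (∫ s, f s) ≤ C :=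
  le_trans (le_abs_self _) (ui_abs_integral_le h)

lemma ui_integrable {f : UI → ℝ} (hm : Measurable f) {C : ℝ} (hb : ∀ s, ‖f s‖ ≤ C) :
    Integrable f :=
  (integrable_const C).mono' hm.aestronglyMeasurable (ae_of_all _ hb)

lemma mono_meas {f : UI → ℝ} (hf : Monotone f) (hb : BddAbove (Set.range f)) :
    Measurable f := by
  set F : ℝ → ℝ := fun x =>
    if hx : x ∈ Set.Ico (0:ℝ) 1 then f ⟨x, hx⟩ else
      if x < 0 then f ⟨0, ui_mem0⟩ else sSup (Set.range f) with hF
  have hle : ∀ s : UI, f s ≤ sSup (Set.range f) := fun s => le_csSup hb (Set.mem_range_self s)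
  have hWin : ∀ (x : ℝ) (hx : x ∈ Set.Ico (0:ℝ) 1), F x = f ⟨x, hx⟩ := by
    intro x hx; simp only [hF, dif_pos hx]
  have hWlt : ∀ x : ℝ, x < 0 → F x = f ⟨0, ui_mem0⟩ := by
    intro x hx
    have : x ∉ Set.Ico (0:ℝ) 1 := by simp [Set.mem_Ico]; intro h; linarith
    simp only [hF, dif_neg this, if_pos hx]
  have hWge : ∀ x : ℝ, 1 ≤ x → F x = sSup (Set.range f) := by
    intro x hx
    have h1 : x ∉ Set.Ico (0:ℝ) 1 := by simp [Set.mem_Ico]; intro h; linarith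
    have h2 : ¬ x < 0 := by linarith
    simp only [hF, dif_neg h1, if_neg h2]
  have low : ∀ x : ℝ, f ⟨0, ui_mem0⟩ ≤ F x := by
    intro x
    rcases lt_or_ge x 0 with h | h
    · rw [hWlt x h]
    rcases lt_or_ge x 1 with h1 | h1
    · rw [hWin x ⟨h, h1⟩]; exact hf (by exact_mod_cast h)
    · rw [hWge x h1]; exact hle _
  have hFmono : Monotone F := by
    intro a b hab
    rcases lt_or_ge a 0 with h | h
    · rw [hWlt a h]; exact low b
    rcases lt_or_ge a 1 with h1 | h1
    · rw [hWin a ⟨h, h1⟩]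
      rcases lt_or_ge b 1 with h2 | h2
      · rw [hWin b ⟨le_trans h hab, h2⟩]; exact hf (by exact_mod_cast hab)
      · rw [hWge b h2]; exact hle _
    · rw [hWge a h1, hWge b (le_trans h1 hab)]
  have : f = F ∘ (Subtype.val : UI → ℝ) := by
    funext s
    simp only [Function.comp_apply, hWin s.1 s.2]
  rw [this]
  exact hFmono.measurable.comp measurable_subtype_coe

lemma entry_le_norm {D : ℕ} (a : Mat D) (k : Fin D × Fin D) : |a k| ≤ ‖a‖ := by
  rw [EuclideanSpace.norm_eq, ← Real.sqrt_sq_eq_abs (a k)]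
  apply Real.sqrt_le_sqrt
  calc a k ^ 2 = ‖a k‖ ^ 2 := by rw [Real.norm_eq_abs, sq_abs]
  _ ≤ _ := Finset.single_le_sum (fun i _ => sq_nonneg ‖a i‖) (Finset.mem_univ k)

lemma quad_identity {D : ℕ} (a : Mat D) (hsym : ∀ i j : Fin D, a (i, j) = a (j, i)) (i j : Fin D) :
    (∑ i', ∑ j', ((if i' = i then (1:ℝ) else 0) + if i' = j then 1 else 0) * a (i', j') *
        ((if j' = i then (1:ℝ) else 0) + if j' = j then 1 else 0))
      - (∑ i', ∑ j', (if i' = i then (1:ℝ) else 0) * a (i', j') * (if j' = i then (1:ℝ) else 0))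
      - (∑ i', ∑ j', (if i' = j then (1:ℝ) else 0) * a (i', j') * (if j' = j then (1:ℝ) else 0))
      = 2 * a (i, j) := by
  simp only [add_mul, mul_add, ite_mul, one_mul, zero_mul, mul_ite, mul_one, mul_zero,
    Finset.sum_add_distrib, Finset.sum_ite_eq', Finset.mem_univ, if_pos]
  rw [hsym j i]
  ring

lemma path_measurable {D : ℕ} {p : SPath D}
    (h1 : ∀ s, Mat.PSD (p s))
    (h2 : ∀ s t : UI, s ≤ t → Mat.PSD (p t - p s))
    (C : ℝ) (hC : ∀ s, ‖p s‖ ≤ C) :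
    Measurable p := by
  have hg : ∀ v : Fin D → ℝ, Measurable fun s => ∑ i, ∑ j, v i * p s (i, j) * v j := by
    intro v
    apply mono_meas
    · intro s t hst
      have := (h2 s t hst).2 v
      have happ : ∀ k : Fin D × Fin D, (p t - p s) k = p t k - p s k := fun k => rfl
      simp only [happ] at this
      have expand : ∑ i, ∑ j, v i * (p t (i,j) - p s (i,j)) * v j
          = (∑ i, ∑ j, v i * p t (i,j) * v j) - ∑ i, ∑ j, v i * p s (i,j) * v j := by
        rw [← Finset.sum_sub_distrib]
        congr 1; funext i
        rw [← Finset.sum_sub_distrib]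
        congr 1; funext j
        ring
      rw [expand] at this
      linarith
    · refine ⟨C * ∑ i : Fin D, ∑ j : Fin D, |v i| * |v j|, ?_⟩
      rintro x ⟨s, rfl⟩
      calc ∑ i, ∑ j, v i * p s (i, j) * v j ≤ ∑ i, ∑ j, |v i * p s (i, j) * v j| := by
            apply Finset.sum_le_sum; intro i _
            apply Finset.sum_le_sum; intro j _
            exact le_abs_self _
      _ ≤ ∑ i, ∑ j, |v i| * C * |v j| := by
            apply Finset.sum_le_sum; intro i _
            apply Finset.sum_le_sum; intro j _
            rw [abs_mul, abs_mul]
            have h1' : |p s (i,j)| ≤ C := le_trans (entry_le_norm _ _) (hC s)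
            exact mul_le_mul_of_nonneg_right (mul_le_mul_of_nonneg_left h1' (abs_nonneg _)) (abs_nonneg _)
      _ = C * ∑ i : Fin D, ∑ j : Fin D, |v i| * |v j| := by
            rw [Finset.mul_sum]
            congr 1; funext i
            rw [Finset.mul_sum]
            congr 1; funext j
            ring
  refine (WithLp.measurable_toLp 2 (Fin D × Fin D → ℝ)).comp (f := fun s => (p s).ofLp) ?_
  apply measurable_pi_iff.mpr
  rintro ⟨i, j⟩
  show Measurable fun s => p s (i, j)
  have key : (fun s => p s (i, j)) = fun s =>
      ((∑ i', ∑ j', ((if i' = i then (1:ℝ) else 0) + if i' = j then 1 else 0) * p s (i', j') *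
        ((if j' = i then (1:ℝ) else 0) + if j' = j then 1 else 0))
      - (∑ i', ∑ j', (if i' = i then (1:ℝ) else 0) * p s (i', j') * (if j' = i then (1:ℝ) else 0))
      - (∑ i', ∑ j', (if i' = j then (1:ℝ) else 0) * p s (i', j') * (if j' = j then (1:ℝ) else 0))) / 2 := by
    funext s
    rw [quad_identity (p s) (h1 s).1 i j]
    ring
  rw [key]
  exact (((hg _).sub (hg _)).sub (hg _)).div_const 2

lemma Mat.PSD.add' {D : ℕ} {a b : Mat D} (ha : a.PSD) (hb : b.PSD) : (a + b).PSD := by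
  constructor
  · intro i j; show a (i,j) + b (i,j) = a (j,i) + b (j,i); rw [ha.1 i j, hb.1 i j]
  · intro v
    have expand : ∑ i, ∑ j, v i * (a + b) (i,j) * v j
        = (∑ i, ∑ j, v i * a (i,j) * v j) + ∑ i, ∑ j, v i * b (i,j) * v j := by
      rw [← Finset.sum_add_distrib]
      congr 1; funext i
      rw [← Finset.sum_add_distrib]
      congr 1; funext j
      show v i * (a (i,j) + b (i,j)) * v j = _
      ring
    rw [expand]
    exact add_nonneg (ha.2 v) (hb.2 v)

lemma Mat.PSD.smul' {D : ℕ} {a : Mat D} (ha : a.PSD) {t : ℝ} (ht : 0 ≤ t) : (t • a).PSD := by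
  constructor
  · intro i j; show t * a (i,j) = t * a (j,i); rw [ha.1 i j]
  · intro v
    have expand : ∑ i, ∑ j, v i * (t • a) (i,j) * v j
        = t * ∑ i, ∑ j, v i * a (i,j) * v j := by
      rw [Finset.mul_sum]
      congr 1; funext i
      rw [Finset.mul_sum]
      congr 1; funext j
      show v i * (t * a (i,j)) * v j = _
      ring
    rw [expand]
    exact mul_nonneg ht (ha.2 v)

lemma grad_cont {D : ℕ} (ξ : Mat D → ℝ) (hξ : ContDiff ℝ (⊤ : ℕ∞) ξ) : Continuous (gradient ξ) := by
  have : gradient ξ = fun x => (InnerProductSpace.toDual ℝ (Mat D)).symm (fderiv ℝ ξ x) := rfl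
  rw [this]
  exact (InnerProductSpace.toDual ℝ (Mat D)).symm.continuous.comp (hξ.continuous_fderiv (by simp))

lemma has_grad {D : ℕ} (ξ : Mat D → ℝ) (hξ : ContDiff ℝ (⊤ : ℕ∞) ξ) (a : Mat D) :
    HasGradientAt ξ (gradient ξ a) a :=
  (hξ.differentiable (by simp) a).hasGradientAt

lemma line_deriv {D : ℕ} (ξ : Mat D → ℝ) (hξ : ContDiff ℝ (⊤ : ℕ∞) ξ) (a v : Mat D) (c : ℝ) :
    HasDerivAt (fun τ : ℝ => ξ (a + τ • v)) ⟪gradient ξ (a + c • v), v⟫ c := by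
  have hline : HasDerivAt (fun τ : ℝ => a + τ • v) v c := by
    simpa using ((hasDerivAt_id c).smul_const v).const_add a
  have h2 := (has_grad ξ hξ (a + c • v)).hasFDerivAt.comp_hasDerivAt c hline
  simpa [InnerProductSpace.toDual_apply_apply, Function.comp_def] using h2

lemma taylor_bound {D : ℕ} (ξ : Mat D → ℝ) (hξ : ContDiff ℝ (⊤ : ℕ∞) ξ) {L : ℝ} (hLip : LipOnB ξ L)
    (hL : 0 ≤ L) (a b : Mat D) (ha : ‖a‖ ≤ 1) (hb : ‖b‖ ≤ 1) :
    |ξ b - ξ a - ⟪gradient ξ a, b - a⟫| ≤ L * ‖b - a‖ ^ 2 := by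
  rcases eq_or_ne b a with rfl | hne
  · simp
  set v := b - a with hv
  set φ : ℝ → ℝ := fun τ => ξ (a + τ • v) with hφ
  have hd : ∀ c : ℝ, HasDerivAt φ ⟪gradient ξ (a + c • v), v⟫ c := fun c => line_deriv ξ hξ a v c
  obtain ⟨c, hc, hceq⟩ := exists_hasDerivAt_eq_slope φ (fun c => ⟪gradient ξ (a + c • v), v⟫)
    (zero_lt_one) (Continuous.continuousOn (by
      have : Continuous φ := (hξ.continuous).comp (by continuity)
      exact this)) (fun x _ => hd x)
  have h01 : φ 1 = ξ b := by simp [hφ, hv]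
  have h00 : φ 0 = ξ a := by simp [hφ]
  rw [h01, h00] at hceq
  have hslope : ξ b - ξ a = ⟪gradient ξ (a + c • v), v⟫ := by
    rw [hceq]; ring
  have hmem : ‖a + c • v‖ ≤ 1 := by
    have : a + c • v = (1 - c) • a + c • b := by
      rw [hv]; module
    rw [this]
    calc ‖(1-c) • a + c • b‖ ≤ ‖(1-c) • a‖ + ‖c • b‖ := norm_add_le _ _
    _ = (1-c) * ‖a‖ + c * ‖b‖ := by
        rw [norm_smul, norm_smul, Real.norm_eq_abs, Real.norm_eq_abs,
          abs_of_nonneg (by linarith [hc.2] : (0:ℝ) ≤ 1 - c), abs_of_nonneg (le_of_lt hc.1)]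
    _ ≤ (1-c) * 1 + c * 1 := by
        have := hc.1; have := hc.2
        gcongr <;> linarith
    _ = 1 := by ring
  rw [hslope, ← inner_sub_left]
  calc |⟪gradient ξ (a + c • v) - gradient ξ a, v⟫|
      ≤ ‖gradient ξ (a + c • v) - gradient ξ a‖ * ‖v‖ := abs_real_inner_le_norm _ _
  _ ≤ (L * ‖a + c • v - a‖) * ‖v‖ := by
      apply mul_le_mul_of_nonneg_right _ (norm_nonneg v)
      exact hLip _ _ hmem ha
  _ ≤ (L * ‖v‖) * ‖v‖ := by
      apply mul_le_mul_of_nonneg_right _ (norm_nonneg v)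
      apply mul_le_mul_of_nonneg_left _ hL
      have : a + c • v - a = c • v := by module
      rw [this, norm_smul, Real.norm_eq_abs, abs_of_nonneg (le_of_lt hc.1)]
      calc c * ‖v‖ ≤ 1 * ‖v‖ := mul_le_mul_of_nonneg_right (le_of_lt hc.2) (norm_nonneg v)
      _ = ‖v‖ := one_mul _
  _ = L * ‖v‖ ^ 2 := by ring

section gradquad

variable {E : Type*} [NormedAddCommGroup E] [InnerProductSpace ℝ E] [CompleteSpace E]

lemma hasGradientAt_of_quadratic {f : E → ℝ} {g : E} {x : E} {C : ℝ} (hC : 0 ≤ C)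
    (h : ∀ x', |f x' - f x - ⟪x' - x, g⟫| ≤ C * ‖x' - x‖ ^ 2) :
    HasGradientAt f g x := by
  rw [hasGradientAt_iff_hasFDerivAt, hasFDerivAt_iff_isLittleO_nhds_zero]
  rw [Asymptotics.isLittleO_iff]
  intro c hc
  have hev : ∀ᶠ h' : E in 𝓝 0, ‖h'‖ ≤ c / (C + 1) := by
    have : (0:ℝ) < c / (C+1) := div_pos hc (by linarith)
    filter_upwards [Metric.ball_mem_nhds 0 this] with y hy
    rw [Metric.mem_ball, dist_zero_right] at hy
    exact le_of_lt hy
  filter_upwards [hev] with y hy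
  have h2 := h (x + y)
  simp only [add_sub_cancel_left] at h2
  have h3 : (InnerProductSpace.toDual ℝ E g) y = ⟪g, y⟫ := rfl
  rw [Real.norm_eq_abs, h3]
  have h4 : ⟪g, y⟫ = ⟪y, g⟫ := real_inner_comm _ _
  rw [h4]
  calc |f (x + y) - f x - ⟪y, g⟫| ≤ C * ‖y‖ ^ 2 := h2
  _ = (C * ‖y‖) * ‖y‖ := by ring
  _ ≤ c * ‖y‖ := by
      apply mul_le_mul_of_nonneg_right _ (norm_nonneg y)
      calc C * ‖y‖ ≤ C * (c / (C+1)) := mul_le_mul_of_nonneg_left hy hC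
      _ ≤ c := by
          rw [div_eq_mul_inv]
          have hC1 : (0:ℝ) < C + 1 := by linarith
          rw [mul_comm c, ← mul_assoc]
          calc C * (C+1)⁻¹ * c ≤ 1 * c := by
                apply mul_le_mul_of_nonneg_right _ (le_of_lt hc)
                rw [← div_eq_mul_inv, div_le_one hC1]; linarith
          _ = c := one_mul c

lemma lipschitz_of_grad_bound {f : E → ℝ} {g : E → E} {H : ℝ}
    (hf : ∀ x, HasGradientAt f (g x) x) (hg : ∀ x, ‖g x‖ ≤ H) (x y : E) :
    ‖f y - f x‖ ≤ H * ‖y - x‖ := by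
  apply Convex.norm_image_sub_le_of_norm_hasFDerivWithin_le
    (f' := fun x => InnerProductSpace.toDual ℝ E (g x))
    (fun z _ => ((hf z).hasFDerivAt).hasFDerivWithinAt) _ convex_univ (Set.mem_univ x)
    (Set.mem_univ y)
  intro z _
  rw [LinearIsometryEquiv.norm_map]
  exact hg z

end gradquad

lemma qinf_add_smul {D : ℕ} {q G : SPath D} (hq : q ∈ Qinf D) (hG : G ∈ Qinf D) {t : ℝ}
    (ht : 0 ≤ t) : q + t • G ∈ Qinf D := by
  obtain ⟨⟨hq1, hq2, hq3, hq4⟩, hqB⟩ := hq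
  obtain ⟨⟨hG1, hG2, hG3, hG4⟩, hGB⟩ := hG
  refine ⟨⟨?_, ?_, ?_, ?_⟩, ?_⟩
  · intro s
    exact Mat.PSD.add' (hq1 s) (Mat.PSD.smul' (hG1 s) ht)
  · intro s u hsu
    have heq : (q + t • G) u - (q + t • G) s = (q u - q s) + t • (G u - G s) := by
      show q u + t • G u - (q s + t • G s) = _
      module
    rw [heq]
    exact Mat.PSD.add' (hq2 s u hsu) (Mat.PSD.smul' (hG2 s u hsu) ht)
  · intro s
    exact (hq3 s).add ((hG3 s).const_smul t)
  · intro s hs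
    obtain ⟨Lq, hLq⟩ := hq4 s hs
    obtain ⟨LG, hLG⟩ := hG4 s hs
    exact ⟨Lq + t • LG, hLq.add (hLG.const_smul t)⟩
  · obtain ⟨Cq, hCq⟩ := hqB
    obtain ⟨CG, hCG⟩ := hGB
    refine ⟨Cq + t * CG, ?_⟩
    rintro x ⟨s, rfl⟩
    have h1 : ‖q s‖ ≤ Cq := hCq (Set.mem_range_self s)
    have h2 : ‖G s‖ ≤ CG := hCG (Set.mem_range_self s)
    calc ‖(q + t • G) s‖ = ‖q s + t • G s‖ := rfl
    _ ≤ ‖q s‖ + ‖t • G s‖ := norm_add_le _ _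
    _ = ‖q s‖ + t * ‖G s‖ := by rw [norm_smul, Real.norm_eq_abs, abs_of_nonneg ht]
    _ ≤ Cq + t * CG := add_le_add h1 (mul_le_mul_of_nonneg_left h2 ht)

set_option maxHeartbeats 1000000 in
/-- Differentiability of the limit free energy in the external parameter (Lemma 4.4).
Here `ψ x`, `Dqψ x`, `Dxψ x` play the roles of `ψ(·;x)`, `∇_q ψ(·;x)`, `∇_x ψ(·;x)`, and
`H = ‖h‖_{L^∞}`.  With `p x = p^x` a solution of the fixed point equation and
`f(t,q;x) = ψ(q + t∇ξ(p^x);x) − t∫₀¹ θ(p^x(u))du`, the map `x ↦ f(t,q;x)` is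
`H`-Lipschitz and continuously differentiable, with gradient
`∇_x ψ(q + t∇ξ(p^x); x)`. -/
theorem limit_free_energy_differentiable_in_parameter
    {D d : ℕ} (hD : 1 ≤ D) (hd : 1 ≤ d) (H : ℝ) (hH : 0 ≤ H)
    (L_ψ L_ξ : ℝ) (hLψ : 0 < L_ψ) (hLξ : 0 < L_ξ)
    (ξ : Mat D → ℝ) (hξ : ContDiff ℝ (⊤ : ℕ∞) ξ) (hξLip : LipOnB ξ L_ξ)
    (hgp : ∀ p ∈ Qle1 D, gradPath ξ p ∈ Qinf D)
    (ψ : EuclideanSpace ℝ (Fin d) → SPath D → ℝ)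
    (Dqψ : EuclideanSpace ℝ (Fin d) → SPath D → SPath D)
    (Dxψ : EuclideanSpace ℝ (Fin d) → SPath D → EuclideanSpace ℝ (Fin d))
    -- (i) quadratic Fréchet bound for the `L²`-gradient `∇_q ψ(·;x) ∈ Q_{∞,≤1}`
    (hq1 : ∀ x : EuclideanSpace ℝ (Fin d), ∀ qt ∈ Qinf D, Dqψ x qt ∈ Qle1 D ∧
      ∀ qt' ∈ Qinf D,
        |ψ x qt' - ψ x qt - L2I (qt' - qt) (Dqψ x qt)| ≤ 8 * L2N (qt' - qt) ^ 2)
    -- (ii) joint Lipschitz bound for `∇_q ψ`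
    (hq2 : ∀ x x' : EuclideanSpace ℝ (Fin d), ∀ qt ∈ Qinf D, ∀ qt' ∈ Qinf D,
      supN (Dqψ x qt - Dqψ x' qt') ≤ L_ψ * supN (qt - qt') + 4 * H * ‖x - x'‖)
    -- (iii) differentiability in `x` with the stated bounds
    (hx1 : ∀ x : EuclideanSpace ℝ (Fin d), ∀ qt ∈ Qinf D, ‖Dxψ x qt‖ ≤ H)
    (hx2 : ∀ x x' : EuclideanSpace ℝ (Fin d), ∀ qt ∈ Qinf D,
      |ψ x' qt - ψ x qt - ⟪x' - x, Dxψ x qt⟫| ≤ H ^ 2 * ‖x - x'‖ ^ 2)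
    (hx3 : ∀ x x' : EuclideanSpace ℝ (Fin d), ∀ qt ∈ Qinf D, ∀ qt' ∈ Qinf D,
      ‖Dxψ x qt - Dxψ x' qt'‖ ≤ 8 * H * L1N (qt - qt') + 2 * H ^ 2 * ‖x - x'‖)
    (t : ℝ) (ht0 : 0 ≤ t) (ht : t < (L_ψ * L_ξ)⁻¹)
    (q : SPath D) (hq : q ∈ Qinf D)
    (p : EuclideanSpace ℝ (Fin d) → SPath D)
    (hp : ∀ x : EuclideanSpace ℝ (Fin d),
      p x ∈ Qle1 D ∧ p x = Dqψ x (q + t • gradPath ξ (p x))) :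
    -- `x ↦ f(t,q;x)` is Lipschitz with constant `H` ...
    (∀ x x' : EuclideanSpace ℝ (Fin d),
      |(ψ x (q + t • gradPath ξ (p x)) - t * ∫ u, theta ξ (p x u)) -
        (ψ x' (q + t • gradPath ξ (p x')) - t * ∫ u, theta ξ (p x' u))| ≤ H * ‖x - x'‖) ∧
    -- ... and continuously differentiable with gradient `∇_x ψ(q + t∇ξ(p^x); x)`
    (∀ x : EuclideanSpace ℝ (Fin d),
      HasGradientAt
        (fun x' : EuclideanSpace ℝ (Fin d) =>
          ψ x' (q + t • gradPath ξ (p x')) - t * ∫ u, theta ξ (p x' u))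
        (Dxψ x (q + t • gradPath ξ (p x))) x) ∧
    Continuous (fun x : EuclideanSpace ℝ (Fin d) => Dxψ x (q + t • gradPath ξ (p x))) := by
  
  classical
  have hprod : 0 < L_ψ * L_ξ := mul_pos hLψ hLξ
  have hκ : t * (L_ψ * L_ξ) < 1 := by
    rw [inv_eq_one_div] at ht
    exact (lt_div_iff₀ hprod).mp ht
  have h1κ : 0 < 1 - t * (L_ψ * L_ξ) := by linarith
  set K : ℝ := 4 * H / (1 - t * (L_ψ * L_ξ)) with hKdef
  have hK0 : 0 ≤ K := div_nonneg (by linarith) h1κ.le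
  have hpQ1 : ∀ y, p y ∈ Qle1 D := fun y => (hp y).1
  have hp1 : ∀ y s, ‖p y s‖ ≤ 1 := fun y => (hp y).1.2
  have hqtQ : ∀ y : EuclideanSpace ℝ (Fin d), q + t • gradPath ξ (p y) ∈ Qinf D :=
    fun y => qinf_add_smul hq (hgp _ (hpQ1 y)) ht0
  -- pointwise fixed-point stability estimate
  have key : ∀ y y' : EuclideanSpace ℝ (Fin d), ∀ s : UI,
      ‖p y s - p y' s‖ ≤ K * ‖y - y'‖ := by
    intro y y'
    have hBdd : BddAbove (Set.range fun s => ‖(p y - p y') s‖) := by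
      refine ⟨2, ?_⟩
      rintro z ⟨s, rfl⟩
      calc ‖(p y - p y') s‖ = ‖p y s - p y' s‖ := rfl
      _ ≤ ‖p y s‖ + ‖p y' s‖ := norm_sub_le _ _
      _ ≤ 1 + 1 := add_le_add (hp1 y s) (hp1 y' s)
      _ = 2 := by norm_num
    have hMem : ∀ s : UI, ‖p y s - p y' s‖ ≤ supN (p y - p y') := by
      intro s
      exact le_csSup hBdd ⟨s, rfl⟩
    have hqtdiff : ∀ s : UI, ‖(q + t • gradPath ξ (p y)) s - (q + t • gradPath ξ (p y')) s‖
        ≤ t * L_ξ * supN (p y - p y') := by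
      intro s
      have heq : (q + t • gradPath ξ (p y)) s - (q + t • gradPath ξ (p y')) s
          = t • (gradient ξ (p y s) - gradient ξ (p y' s)) := by
        show q s + t • gradient ξ (p y s) - (q s + t • gradient ξ (p y' s)) = _
        module
      rw [heq, norm_smul, Real.norm_eq_abs, abs_of_nonneg ht0]
      calc t * ‖gradient ξ (p y s) - gradient ξ (p y' s)‖
          ≤ t * (L_ξ * ‖p y s - p y' s‖) :=
            mul_le_mul_of_nonneg_left (hξLip _ _ (hp1 y s) (hp1 y' s)) ht0
      _ ≤ t * (L_ξ * supN (p y - p y')) := by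
          apply mul_le_mul_of_nonneg_left _ ht0
          exact mul_le_mul_of_nonneg_left (hMem s) hLξ.le
      _ = t * L_ξ * supN (p y - p y') := by ring
    have hsupqt : supN ((q + t • gradPath ξ (p y)) - (q + t • gradPath ξ (p y')))
        ≤ t * L_ξ * supN (p y - p y') := by
      show sSup _ ≤ _
      apply csSup_le (Set.range_nonempty _)
      rintro z ⟨s, rfl⟩
      exact hqtdiff s
    have hMeq : supN (p y - p y') = supN (Dqψ y (q + t • gradPath ξ (p y))
        - Dqψ y' (q + t • gradPath ξ (p y'))) := by
      rw [← (hp y).2, ← (hp y').2]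
    have happ := hq2 y y' _ (hqtQ y) _ (hqtQ y')
    have hchain : supN (p y - p y')
        ≤ t * (L_ψ * L_ξ) * supN (p y - p y') + 4 * H * ‖y - y'‖ := by
      calc supN (p y - p y') = _ := hMeq
      _ ≤ L_ψ * supN ((q + t • gradPath ξ (p y)) - (q + t • gradPath ξ (p y')))
            + 4 * H * ‖y - y'‖ := happ
      _ ≤ L_ψ * (t * L_ξ * supN (p y - p y')) + 4 * H * ‖y - y'‖ := by
          have := mul_le_mul_of_nonneg_left hsupqt hLψ.le
          linarith
      _ = t * (L_ψ * L_ξ) * supN (p y - p y') + 4 * H * ‖y - y'‖ := by ring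
    have hMle : supN (p y - p y') ≤ K * ‖y - y'‖ := by
      rw [hKdef, div_mul_eq_mul_div, le_div_iff₀ h1κ]
      nlinarith [hchain]
    intro s
    exact (hMem s).trans hMle
  have qtkey : ∀ y y' : EuclideanSpace ℝ (Fin d), ∀ s : UI,
      ‖(q + t • gradPath ξ (p y)) s - (q + t • gradPath ξ (p y')) s‖
        ≤ t * L_ξ * K * ‖y - y'‖ := by
    intro y y' s
    have heq : (q + t • gradPath ξ (p y)) s - (q + t • gradPath ξ (p y')) s
        = t • (gradient ξ (p y s) - gradient ξ (p y' s)) := by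
      show q s + t • gradient ξ (p y s) - (q s + t • gradient ξ (p y' s)) = _
      module
    rw [heq, norm_smul, Real.norm_eq_abs, abs_of_nonneg ht0]
    calc t * ‖gradient ξ (p y s) - gradient ξ (p y' s)‖
        ≤ t * (L_ξ * ‖p y s - p y' s‖) :=
          mul_le_mul_of_nonneg_left (hξLip _ _ (hp1 y s) (hp1 y' s)) ht0
    _ ≤ t * (L_ξ * (K * ‖y - y'‖)) := by
        apply mul_le_mul_of_nonneg_left _ ht0
        exact mul_le_mul_of_nonneg_left (key y y' s) hLξ.le
    _ = t * L_ξ * K * ‖y - y'‖ := by ring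
  -- integrability facts
  have hcontθ : Continuous (theta ξ) := (continuous_id.inner (grad_cont ξ hξ)).sub hξ.continuous
  obtain ⟨Cθ, hCθ⟩ : ∃ C : ℝ, ∀ a : Mat D, ‖a‖ ≤ 1 → ‖theta ξ a‖ ≤ C := by
    obtain ⟨C, hC⟩ :=
      (isCompact_closedBall (0 : Mat D) 1).exists_bound_of_continuousOn hcontθ.continuousOn
    exact ⟨C, fun a ha => hC a (by simpa [Metric.mem_closedBall, dist_zero_right] using ha)⟩
  have hmeasp : ∀ y, Measurable (p y) := fun y =>
    path_measurable (hp y).1.1.1 (hp y).1.1.2.1 1 (hp1 y)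
  have hmeasg : ∀ y, Measurable (gradPath ξ (p y)) := fun y =>
    ((grad_cont ξ hξ).measurable).comp (hmeasp y)
  obtain ⟨Cq, hCq'⟩ := hq.2
  have hCq : ∀ s, ‖q s‖ ≤ Cq := fun s => hCq' ⟨s, rfl⟩
  have hmeasq : Measurable q := path_measurable hq.1.1 hq.1.2.1 Cq hCq
  have hmeasqt : ∀ y, Measurable (q + t • gradPath ξ (p y)) := by
    intro y
    have heq : (q + t • gradPath ξ (p y)) = fun s => q s + t • (gradPath ξ (p y) s) := rfl
    rw [heq]
    exact hmeasq.add ((hmeasg y).const_smul t)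
  have hθint : ∀ y, Integrable fun s => theta ξ (p y s) := fun y =>
    ui_integrable (hcontθ.measurable.comp (hmeasp y)) (fun s => hCθ _ (hp1 y s))
  -- the main quadratic estimate
  have hC₀0 : 0 ≤ 8 * (t * L_ξ * K) ^ 2 + H ^ 2 + 2 * t * L_ξ * K ^ 2 := by positivity
  have main_est : ∀ y y' : EuclideanSpace ℝ (Fin d),
      |(ψ y' (q + t • gradPath ξ (p y')) - t * ∫ u, theta ξ (p y' u))
        - (ψ y (q + t • gradPath ξ (p y)) - t * ∫ u, theta ξ (p y u))
        - ⟪y' - y, Dxψ y (q + t • gradPath ξ (p y))⟫|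
      ≤ (8 * (t * L_ξ * K) ^ 2 + H ^ 2 + 2 * t * L_ξ * K ^ 2) * ‖y' - y‖ ^ 2 := by
    intro y y'
    have hA := (hq1 y' (q + t • gradPath ξ (p y')) (hqtQ y')).2
      (q + t • gradPath ξ (p y)) (hqtQ y)
    rw [← (hp y').2] at hA
    have hL2Nsq : L2N ((q + t • gradPath ξ (p y)) - (q + t • gradPath ξ (p y'))) ^ 2
        ≤ (t * L_ξ * K * ‖y - y'‖) ^ 2 := by
      have heq : L2N ((q + t • gradPath ξ (p y)) - (q + t • gradPath ξ (p y'))) ^ 2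
          = ∫ s, ‖((q + t • gradPath ξ (p y)) - (q + t • gradPath ξ (p y'))) s‖ ^ 2 :=
        Real.sq_sqrt (integral_nonneg fun s => sq_nonneg _)
      rw [heq]
      apply ui_integral_le
      intro s
      rw [Real.norm_eq_abs, abs_of_nonneg (sq_nonneg _)]
      exact pow_le_pow_left₀ (norm_nonneg _) (qtkey y y' s) 2
    have hB := hx2 y y' (q + t • gradPath ξ (p y)) (hqtQ y)
    have hf1 : Integrable fun s : UI =>
        ⟪(q + t • gradPath ξ (p y)) s - (q + t • gradPath ξ (p y')) s, p y' s⟫ := by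
      apply ui_integrable (((hmeasqt y).sub (hmeasqt y')).inner (hmeasp y'))
      intro s
      rw [Real.norm_eq_abs]
      calc |⟪(q + t • gradPath ξ (p y)) s - (q + t • gradPath ξ (p y')) s, p y' s⟫|
          ≤ ‖(q + t • gradPath ξ (p y)) s - (q + t • gradPath ξ (p y')) s‖ * ‖p y' s‖ :=
            abs_real_inner_le_norm _ _
      _ ≤ (t * L_ξ * K * ‖y - y'‖) * 1 :=
            mul_le_mul (qtkey y y' s) (hp1 y' s) (norm_nonneg _) (by positivity)
      _ = t * L_ξ * K * ‖y - y'‖ := mul_one _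
    have hsplit : (∫ s : UI,
        (⟪(q + t • gradPath ξ (p y)) s - (q + t • gradPath ξ (p y')) s, p y' s⟫
          + t * theta ξ (p y' s) - t * theta ξ (p y s)))
        = L2I ((q + t • gradPath ξ (p y)) - (q + t • gradPath ξ (p y'))) (p y')
          + t * (∫ u, theta ξ (p y' u)) - t * (∫ u, theta ξ (p y u)) := by
      have e0 : (∫ s : UI,
          (⟪(q + t • gradPath ξ (p y)) s - (q + t • gradPath ξ (p y')) s, p y' s⟫
            + t * theta ξ (p y' s) - t * theta ξ (p y s)))
          = (∫ s : UI, (⟪(q + t • gradPath ξ (p y)) s - (q + t • gradPath ξ (p y')) s, p y' s⟫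
            + t * theta ξ (p y' s))) - ∫ s : UI, t * theta ξ (p y s) :=
        integral_sub (hf1.add ((hθint y').const_mul t)) ((hθint y).const_mul t)
      have e1 : (∫ s : UI, (⟪(q + t • gradPath ξ (p y)) s - (q + t • gradPath ξ (p y')) s, p y' s⟫
            + t * theta ξ (p y' s)))
          = (∫ s : UI, ⟪(q + t • gradPath ξ (p y)) s - (q + t • gradPath ξ (p y')) s, p y' s⟫)
            + ∫ s : UI, t * theta ξ (p y' s) :=
        integral_add hf1 ((hθint y').const_mul t)
      have e2 : (∫ s : UI, t * theta ξ (p y' s)) = t * ∫ s : UI, theta ξ (p y' s) :=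
        integral_const_mul t _
      have e3 : (∫ s : UI, t * theta ξ (p y s)) = t * ∫ s : UI, theta ξ (p y s) :=
        integral_const_mul t _
      rw [e0, e1, e2, e3]
      rfl
    have hRpt : ∀ s : UI,
        ‖⟪(q + t • gradPath ξ (p y)) s - (q + t • gradPath ξ (p y')) s, p y' s⟫
          + t * theta ξ (p y' s) - t * theta ξ (p y s)‖
        ≤ 2 * t * L_ξ * K ^ 2 * ‖y - y'‖ ^ 2 := by
      intro s
      have heq : (q + t • gradPath ξ (p y)) s - (q + t • gradPath ξ (p y')) s
          = t • (gradient ξ (p y s) - gradient ξ (p y' s)) := by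
        show q s + t • gradient ξ (p y s) - (q s + t • gradient ξ (p y' s)) = _
        module
      have c1 : ⟪p y' s, gradient ξ (p y' s)⟫ = ⟪gradient ξ (p y' s), p y' s⟫ :=
        real_inner_comm _ _
      have c2 : ⟪p y s, gradient ξ (p y s)⟫ = ⟪gradient ξ (p y s), p y s⟫ :=
        real_inner_comm _ _
      have hid : ⟪(q + t • gradPath ξ (p y)) s - (q + t • gradPath ξ (p y')) s, p y' s⟫
          + t * theta ξ (p y' s) - t * theta ξ (p y s)
          = t * (⟪gradient ξ (p y s) - gradient ξ (p y' s), p y' s - p y s⟫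
            + (ξ (p y s) - ξ (p y' s)
              - ⟪gradient ξ (p y' s), p y s - p y' s⟫)) := by
        rw [heq]
        simp only [theta, inner_sub_left, inner_sub_right, real_inner_smul_left, c1, c2]
        ring
      rw [hid, Real.norm_eq_abs, abs_mul, abs_of_nonneg ht0]
      have hXb : |⟪gradient ξ (p y s) - gradient ξ (p y' s), p y' s - p y s⟫|
          ≤ L_ξ * ‖p y s - p y' s‖ ^ 2 := by
        calc |⟪gradient ξ (p y s) - gradient ξ (p y' s), p y' s - p y s⟫|
            ≤ ‖gradient ξ (p y s) - gradient ξ (p y' s)‖ * ‖p y' s - p y s‖ :=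
              abs_real_inner_le_norm _ _
        _ ≤ (L_ξ * ‖p y s - p y' s‖) * ‖p y' s - p y s‖ :=
              mul_le_mul_of_nonneg_right (hξLip _ _ (hp1 y s) (hp1 y' s)) (norm_nonneg _)
        _ = L_ξ * ‖p y s - p y' s‖ ^ 2 := by rw [norm_sub_rev (p y' s) (p y s)]; ring
      have herr : |ξ (p y s) - ξ (p y' s) - ⟪gradient ξ (p y' s), p y s - p y' s⟫|
          ≤ L_ξ * ‖p y s - p y' s‖ ^ 2 :=
        taylor_bound ξ hξ hξLip hLξ.le (p y' s) (p y s) (hp1 y' s) (hp1 y s)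
      have habk : ‖p y s - p y' s‖ ≤ K * ‖y - y'‖ := key y y' s
      calc t * |⟪gradient ξ (p y s) - gradient ξ (p y' s), p y' s - p y s⟫
            + (ξ (p y s) - ξ (p y' s) - ⟪gradient ξ (p y' s), p y s - p y' s⟫)|
          ≤ t * (|⟪gradient ξ (p y s) - gradient ξ (p y' s), p y' s - p y s⟫|
            + |ξ (p y s) - ξ (p y' s) - ⟪gradient ξ (p y' s), p y s - p y' s⟫|) :=
            mul_le_mul_of_nonneg_left (abs_add_le _ _) ht0
      _ ≤ t * (L_ξ * ‖p y s - p y' s‖ ^ 2 + L_ξ * ‖p y s - p y' s‖ ^ 2) :=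
            mul_le_mul_of_nonneg_left (add_le_add hXb herr) ht0
      _ = 2 * t * L_ξ * ‖p y s - p y' s‖ ^ 2 := by ring
      _ ≤ 2 * t * L_ξ * (K * ‖y - y'‖) ^ 2 := by
            apply mul_le_mul_of_nonneg_left _ (by positivity)
            exact pow_le_pow_left₀ (norm_nonneg _) habk 2
      _ = 2 * t * L_ξ * K ^ 2 * ‖y - y'‖ ^ 2 := by ring
    have hR : |L2I ((q + t • gradPath ξ (p y)) - (q + t • gradPath ξ (p y'))) (p y')
          + t * (∫ u, theta ξ (p y' u)) - t * (∫ u, theta ξ (p y u))|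
        ≤ 2 * t * L_ξ * K ^ 2 * ‖y - y'‖ ^ 2 := by
      rw [← hsplit]
      exact ui_abs_integral_le hRpt
    -- assemble
    have heq2 : (ψ y' (q + t • gradPath ξ (p y')) - t * ∫ u, theta ξ (p y' u))
        - (ψ y (q + t • gradPath ξ (p y)) - t * ∫ u, theta ξ (p y u))
        - ⟪y' - y, Dxψ y (q + t • gradPath ξ (p y))⟫
        = -(ψ y' (q + t • gradPath ξ (p y)) - ψ y' (q + t • gradPath ξ (p y'))
            - L2I ((q + t • gradPath ξ (p y)) - (q + t • gradPath ξ (p y'))) (p y'))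
          + (ψ y' (q + t • gradPath ξ (p y)) - ψ y (q + t • gradPath ξ (p y))
            - ⟪y' - y, Dxψ y (q + t • gradPath ξ (p y))⟫)
          - (L2I ((q + t • gradPath ξ (p y)) - (q + t • gradPath ξ (p y'))) (p y')
            + t * (∫ u, theta ξ (p y' u)) - t * (∫ u, theta ξ (p y u))) := by
      ring
    have hnorm : ‖y - y'‖ = ‖y' - y‖ := norm_sub_rev _ _
    calc |(ψ y' (q + t • gradPath ξ (p y')) - t * ∫ u, theta ξ (p y' u))
        - (ψ y (q + t • gradPath ξ (p y)) - t * ∫ u, theta ξ (p y u))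
        - ⟪y' - y, Dxψ y (q + t • gradPath ξ (p y))⟫|
        = |-(ψ y' (q + t • gradPath ξ (p y)) - ψ y' (q + t • gradPath ξ (p y'))
            - L2I ((q + t • gradPath ξ (p y)) - (q + t • gradPath ξ (p y'))) (p y'))
          + (ψ y' (q + t • gradPath ξ (p y)) - ψ y (q + t • gradPath ξ (p y))
            - ⟪y' - y, Dxψ y (q + t • gradPath ξ (p y))⟫)
          - (L2I ((q + t • gradPath ξ (p y)) - (q + t • gradPath ξ (p y'))) (p y')
            + t * (∫ u, theta ξ (p y' u)) - t * (∫ u, theta ξ (p y u)))| := by rw [heq2]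
    _ ≤ |-(ψ y' (q + t • gradPath ξ (p y)) - ψ y' (q + t • gradPath ξ (p y'))
            - L2I ((q + t • gradPath ξ (p y)) - (q + t • gradPath ξ (p y'))) (p y'))
          + (ψ y' (q + t • gradPath ξ (p y)) - ψ y (q + t • gradPath ξ (p y))
            - ⟪y' - y, Dxψ y (q + t • gradPath ξ (p y))⟫)|
          + |L2I ((q + t • gradPath ξ (p y)) - (q + t • gradPath ξ (p y'))) (p y')
            + t * (∫ u, theta ξ (p y' u)) - t * (∫ u, theta ξ (p y u))| := abs_sub _ _
    _ ≤ |ψ y' (q + t • gradPath ξ (p y)) - ψ y' (q + t • gradPath ξ (p y'))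
            - L2I ((q + t • gradPath ξ (p y)) - (q + t • gradPath ξ (p y'))) (p y')|
          + |ψ y' (q + t • gradPath ξ (p y)) - ψ y (q + t • gradPath ξ (p y))
            - ⟪y' - y, Dxψ y (q + t • gradPath ξ (p y))⟫|
          + |L2I ((q + t • gradPath ξ (p y)) - (q + t • gradPath ξ (p y'))) (p y')
            + t * (∫ u, theta ξ (p y' u)) - t * (∫ u, theta ξ (p y u))| := by
        have h' := abs_add_le (-(ψ y' (q + t • gradPath ξ (p y)) - ψ y' (q + t • gradPath ξ (p y'))
            - L2I ((q + t • gradPath ξ (p y)) - (q + t • gradPath ξ (p y'))) (p y')))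
          (ψ y' (q + t • gradPath ξ (p y)) - ψ y (q + t • gradPath ξ (p y))
            - ⟪y' - y, Dxψ y (q + t • gradPath ξ (p y))⟫)
        rw [abs_neg] at h'
        linarith
    _ ≤ 8 * (t * L_ξ * K * ‖y - y'‖) ^ 2 + H ^ 2 * ‖y - y'‖ ^ 2
          + 2 * t * L_ξ * K ^ 2 * ‖y - y'‖ ^ 2 := by
        have h8 : |ψ y' (q + t • gradPath ξ (p y)) - ψ y' (q + t • gradPath ξ (p y'))
            - L2I ((q + t • gradPath ξ (p y)) - (q + t • gradPath ξ (p y'))) (p y')|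
            ≤ 8 * (t * L_ξ * K * ‖y - y'‖) ^ 2 := by
          refine hA.trans ?_
          have := mul_le_mul_of_nonneg_left hL2Nsq (by norm_num : (0:ℝ) ≤ 8)
          linarith
        linarith [hB]
    _ = (8 * (t * L_ξ * K) ^ 2 + H ^ 2 + 2 * t * L_ξ * K ^ 2) * ‖y - y'‖ ^ 2 := by ring
    _ = (8 * (t * L_ξ * K) ^ 2 + H ^ 2 + 2 * t * L_ξ * K ^ 2) * ‖y' - y‖ ^ 2 := by
        rw [hnorm]
  -- conclusions
  have hGbd : ∀ y : EuclideanSpace ℝ (Fin d),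
      ‖Dxψ y (q + t • gradPath ξ (p y))‖ ≤ H := fun y => hx1 y _ (hqtQ y)
  have hgrad : ∀ y : EuclideanSpace ℝ (Fin d),
      HasGradientAt (fun x' : EuclideanSpace ℝ (Fin d) =>
        ψ x' (q + t • gradPath ξ (p x')) - t * ∫ u, theta ξ (p x' u))
        (Dxψ y (q + t • gradPath ξ (p y))) y := by
    intro y
    exact hasGradientAt_of_quadratic hC₀0 (fun x' => main_est y x')
  refine ⟨?_, hgrad, ?_⟩
  · intro x x'
    have h := lipschitz_of_grad_bound hgrad hGbd x' x
    rw [Real.norm_eq_abs] at h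
    simpa using h
  · have hlip : ∀ y y' : EuclideanSpace ℝ (Fin d),
        ‖Dxψ y (q + t • gradPath ξ (p y)) - Dxψ y' (q + t • gradPath ξ (p y'))‖
        ≤ (8 * H * (t * L_ξ * K) + 2 * H ^ 2) * ‖y - y'‖ := by
      intro y y'
      have h3 := hx3 y y' _ (hqtQ y) _ (hqtQ y')
      have hL1 : L1N ((q + t • gradPath ξ (p y)) - (q + t • gradPath ξ (p y')))
          ≤ t * L_ξ * K * ‖y - y'‖ := by
        have heq : L1N ((q + t • gradPath ξ (p y)) - (q + t • gradPath ξ (p y')))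
            = ∫ s, ‖((q + t • gradPath ξ (p y)) - (q + t • gradPath ξ (p y'))) s‖ := rfl
        rw [heq]
        apply ui_integral_le
        intro s
        rw [Real.norm_eq_abs, abs_of_nonneg (norm_nonneg _)]
        exact qtkey y y' s
      refine h3.trans ?_
      have h4 := mul_le_mul_of_nonneg_left hL1 (by positivity : (0:ℝ) ≤ 8 * H)
      have h5 : (0:ℝ) ≤ ‖y - y'‖ := norm_nonneg _
      nlinarith
    have hlipW : LipschitzWith (Real.toNNReal (8 * H * (t * L_ξ * K) + 2 * H ^ 2))
        (fun y : EuclideanSpace ℝ (Fin d) => Dxψ y (q + t • gradPath ξ (p y))) := by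
      apply LipschitzWith.of_dist_le_mul
      intro y y'
      rw [dist_eq_norm, dist_eq_norm]
      refine (hlip y y').trans ?_
      apply mul_le_mul_of_nonneg_right _ (norm_nonneg _)
      exact Real.le_coe_toNNReal _
    exact hlipW.continuous
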